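/- Let G be a finite group whose commutator subgroup is nilpotent, and let p be a prime. Then there exists a normal subgroup N of G whose order is coprime to p such that the quotient group G/N has a normal Sylow p-subgroup. -/

import Mathlib

/-!
Let `H = [G, G]`. Being nilpotent, `H` has a unique Sylow `q`-subgroup for every prime `q`, so the
product `K` of these over `q ≠ p` is characteristic in `H`, hence normal in `G`; it has order
prime to `p` and index a power of `p` in `H`. In `G ⧸ K` the commutator subgroup is the image of
`H`, a normal `p`-group, so it lies in every Sylow `p`-subgroup, and every subgroup containing
the commutator subgroup is normal.
-/

namespace Subgroup

variable {G : Type*} [Group G]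

theorem card_sup_dvd_of_normal (A B : Subgroup G) [B.Normal] :
    Nat.card ↥(A ⊔ B) ∣ Nat.card A * Nat.card B := by
  have h := relIndex_mul_relIndex ⊥ B (A ⊔ B) bot_le le_sup_right
  rw [relIndex_sup_right, relIndex_bot_left, relIndex_bot_left] at h
  rw [← h, mul_comm]
  exact mul_dvd_mul_right (B.relIndex_dvd_card A) _

theorem normal_of_commutator_le {H : Subgroup G} (h : _root_.commutator G ≤ H) : H.Normal :=
  commutator_top_left_le_iff.mp ((commutator_mono le_rfl le_top).trans h)

theorem map_commutator_of_surjective {G' : Type*} [Group G'] {f : G →* G'}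
    (hf : Function.Surjective f) : (_root_.commutator G).map f = _root_.commutator G' := by
  rw [map_commutator_eq, f.range_eq_top.mpr hf]
  rfl

theorem exists_index_eq_pow_of_sylow_le [Finite G] {p : ℕ} {K : Subgroup G}
    (hK : ∀ q ∈ (Nat.card G).primeFactors, q ≠ p → ∃ Q : Sylow q G, ↑Q ≤ K) :
    ∃ k, K.index = p ^ k := by
  refine ⟨_, Nat.eq_prime_pow_of_unique_prime_dvd K.index_ne_zero_of_finite
    fun {q} hq hdvd => ?_⟩
  by_contra hne
  have := Fact.mk hq
  have hqG : q ∈ (Nat.card G).primeFactors :=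
    Nat.mem_primeFactors.mpr ⟨hq, hdvd.trans K.index_dvd_card, Nat.card_pos.ne'⟩
  obtain ⟨Q, hQK⟩ := hK q hqG hne
  exact Q.not_dvd_index (hdvd.trans (index_dvd_of_le hQK))

theorem isPGroup_map_mk_of_index_eq_pow {p k : ℕ} {H : Subgroup G} (K : Subgroup H)
    [(K.map H.subtype).Normal] (hK : K.index = p ^ k) :
    IsPGroup p (H.map (QuotientGroup.mk' (K.map H.subtype))) := by
  set f := (QuotientGroup.mk' (K.map H.subtype)).comp H.subtype
  have hker : f.ker = K := by
    rw [← MonoidHom.comap_ker, QuotientGroup.ker_mk',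
      comap_map_eq_self_of_injective H.subtype_injective]
  have hrange : f.range = H.map (QuotientGroup.mk' (K.map H.subtype)) := by
    rw [MonoidHom.range_comp, range_subtype]
  rw [← hrange]
  exact IsPGroup.of_card (by rw [← index_ker f, hker, hK])

end Subgroup

open Subgroup

theorem Sylow.normal_of_isPGroup_commutator {G : Type*} [Group G] [Finite G] {p : ℕ}
    (h : IsPGroup p (commutator G)) (P : Sylow p G) : (P : Subgroup G).Normal :=
  normal_of_commutator_le (h.le_sylow_of_normal P)

theorem Group.IsNilpotent.exists_characteristic_coprime_index_eq_pow {G : Type*} [Group G]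
    [Finite G] [Group.IsNilpotent G] {p : ℕ} (hp : p.Prime) :
    ∃ K : Subgroup G, K.Characteristic ∧ (Nat.card K).Coprime p ∧ ∃ k, K.index = p ^ k := by
  classical
  let P : ∀ q, Sylow q G := fun _ => default
  set K := ((Nat.card G).primeFactors.erase p).sup fun q => (P q : Subgroup G)
  obtain ⟨hchar, hcop⟩ : K.Characteristic ∧ (Nat.card K).Coprime p := by
    refine Finset.sup_induction
      (p := fun A : Subgroup G => A.Characteristic ∧ (Nat.card A).Coprime p)
      ⟨inferInstance, by simp⟩
      (fun A ⟨_, hAp⟩ B ⟨_, hBp⟩ => ⟨inferInstance,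
        (hAp.mul_left hBp).coprime_dvd_left (card_sup_dvd_of_normal A B)⟩) fun q hq => ?_
    obtain ⟨hne, hq⟩ := Finset.mem_erase.mp hq
    have hq := Nat.prime_of_mem_primeFactors hq
    have := Fact.mk hq
    refine ⟨Sylow.characteristic_of_normal _ inferInstance, ?_⟩
    rw [Sylow.card_eq_multiplicity]
    exact ((Nat.coprime_primes hq hp).mpr hne).pow_left _
  exact ⟨K, hchar, hcop, exists_index_eq_pow_of_sylow_le fun q hq hne =>
    ⟨P q, Finset.le_sup (f := fun q => (P q : Subgroup G))
      (Finset.mem_erase.mpr ⟨hne, hq⟩)⟩⟩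

/-- let `G` be a finite group whose commutator subgroup is nilpotent and let
`p` be a prime.  Then there is a normal subgroup `N` of `G` of order coprime to `p` such
that `G/N` has a normal Sylow `p`-subgroup. -/
theorem exists_normal_coprime_quotient_with_normal_sylow
    (G : Type) [Group G] [Finite G] (hnil : Group.IsNilpotent (commutator G))
    (p : ℕ) (hp : p.Prime) :
    ∃ (N : Subgroup G) (hN : N.Normal), Nat.Coprime (Nat.card N) p ∧
      letI := hN
      ∃ P : Sylow p (G ⧸ N), (P : Subgroup (G ⧸ N)).Normal := by
  obtain ⟨K, _, hcop, k, hindex⟩ :=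
    Group.IsNilpotent.exists_characteristic_coprime_index_eq_pow (G := commutator G) hp
  set N := K.map (commutator G).subtype
  have hcardN : Nat.card N = Nat.card K :=
    card_map_of_injective (commutator G).subtype_injective
  refine ⟨N, inferInstance, hcardN ▸ hcop, ?_⟩
  have hcomm : IsPGroup p (commutator (G ⧸ N)) := by
    rw [← map_commutator_of_surjective (QuotientGroup.mk'_surjective N)]
    exact isPGroup_map_mk_of_index_eq_pow K hindex
  exact ⟨default, Sylow.normal_of_isPGroup_commutator hcomm default⟩
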